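/- arXiv:1502.00829 — 2 statements merged into one kernel-verified Lean document; each statement's English description precedes it below -/
import Mathlib

section
/- Under the k-Triangle-Faithfulness assumption with k > 0, NVV(J), and the true model M: if (X, Y, Z) is a shielded collider in G_M (a triangle with X → Y ← Z) and W is any conditioning set containing Y with |ρ_M(X, Z | W)| < δ, then for any ancestral conditioning set U containing neither Y nor any descendant of Z (where without loss of generality Z is not an ancestor of X), |ρ_M(X, Z | U) − ρ_M(X, Z | W)| < δ(1 + J^{-1/2}/k). -/
open Matrix

namespace SEM

variable {m : ℕ}

/-- `B` is strictly lower triangular (with respect to a causal order):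
`B p q` is the structural coefficient of the edge `X_q → X_p`, and all
edges go from smaller to larger indices. -/
def StrictLower (B : Matrix (Fin m) (Fin m) ℝ) : Prop :=
  ∀ p q : Fin m, p ≤ q → B p q = 0

/-- The covariance matrix of the recursive linear Gaussian SEM `X = B X + ε`,
where the errors `ε` are independent with diagonal covariance matrix `D`:
`Σ = (I − B)⁻¹ D (I − B)⁻ᵀ`. -/
noncomputable def cov (B D : Matrix (Fin m) (Fin m) ℝ) : Matrix (Fin m) (Fin m) ℝ :=
  (1 - B)⁻¹ * D * ((1 - B)ᵀ)⁻¹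

/-- The conditional covariance matrix of `(X_i, X_j)` given the variables indexed by
`W`, obtained from the covariance matrix `S` by the Schur complement. -/
noncomputable def condCov (S : Matrix (Fin m) (Fin m) ℝ) (i j : Fin m)
    (W : Finset (Fin m)) : Matrix (Fin 2) (Fin 2) ℝ :=
  S.submatrix ![i, j] ![i, j] -
    S.submatrix ![i, j] (Subtype.val : {x // x ∈ W} → Fin m) *
      (S.submatrix (Subtype.val : {x // x ∈ W} → Fin m)
        (Subtype.val : {x // x ∈ W} → Fin m))⁻¹ *
      S.submatrix (Subtype.val : {x // x ∈ W} → Fin m) ![i, j]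

/-- The partial correlation of `X_i` and `X_j` given the variables indexed by `W`. -/
noncomputable def parcorr (S : Matrix (Fin m) (Fin m) ℝ) (i j : Fin m)
    (W : Finset (Fin m)) : ℝ :=
  condCov S i j W 0 1 / Real.sqrt (condCov S i j W 0 0 * condCov S i j W 1 1)

/-- The directed edge relation of the SEM: `q → p` iff `B p q ≠ 0`. -/
def Edge (B : Matrix (Fin m) (Fin m) ℝ) (q p : Fin m) : Prop := B p q ≠ 0

/-- `p` is a descendant of `q` (reflexive). -/
def Desc (B : Matrix (Fin m) (Fin m) ℝ) (q p : Fin m) : Prop :=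
  Relation.ReflTransGen (Edge B) q p

/-- A set of variables is ancestral: closed under taking parents. -/
def Ancestral (B : Matrix (Fin m) (Fin m) ℝ) (A : Finset (Fin m)) : Prop :=
  ∀ p ∈ A, ∀ q : Fin m, Edge B q p → q ∈ A

/-- The structural coefficient `e_M(X — Z)` of the edge between adjacent `x` and `z`. -/
noncomputable def eCoef (B : Matrix (Fin m) (Fin m) ℝ) (x z : Fin m) : ℝ :=
  if B z x ≠ 0 then B z x else B x z

end SEM

/-!
Write `Σ` for the covariance matrix and `r_t` for the residual of `X_t` after regressing on
`X_U`, so that `Cov(X_i, X_j | X_U) = (Σ r_j)_i` and `Σ r_t` vanishes on `U`. Splitting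
`X_z = B_z·X + ε_z`, the noise `ε_z` is uncorrelated with the non-descendants of `z`, which
carry `r_x`, and among the parents of `z` only `x` lies outside `U`; hence
`Cov(x, z | U) = B z x · Var(x | U)` and `|ρ(x, z | U)| = |B z x| √(Var(x | U) / Var(z | U))`.
Conditioning lowers variances, so `Var(x | U) ≤ 1`, while Cauchy–Schwarz against `Σ⁻¹ e_z`
gives `Var(z | U) ≥ 1 / (Σ⁻¹)_zz ≥ J`: this is Lemma 2. Triangle faithfulness bounds
`|B z x|` by `|ρ(x, z | W)| / k < δ / k`, and the triangle inequality finishes.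
-/

namespace Matrix

variable {ι : Type*}

section

variable [Fintype ι] {S : Matrix ι ι ℝ}

theorem PosDef.dotProduct_mulVec_comm (hS : S.PosDef) (u v : ι → ℝ) :
    u ⬝ᵥ S *ᵥ v = v ⬝ᵥ S *ᵥ u := by
  rw [dotProduct_mulVec, ← mulVec_transpose, ← conjTranspose_eq_transpose_of_trivial, hS.1,
    dotProduct_comm]

theorem PosDef.dotProduct_mulVec_self_nonneg (hS : S.PosDef) (v : ι → ℝ) :
    0 ≤ v ⬝ᵥ S *ᵥ v := by
  simpa using hS.posSemidef.dotProduct_mulVec_nonneg v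

end

variable [DecidableEq ι] (S : Matrix ι ι ℝ) (U : Finset ι)

/-- Regression coefficients of `X_t` on `X_U`, extended by zero outside `U`. -/
noncomputable def regCoeff (t : ι) : ι → ℝ := fun p =>
  if h : p ∈ U then
    ((S.submatrix (↑) (↑) : Matrix U U ℝ)⁻¹ *ᵥ fun u => S u t) ⟨p, h⟩
  else 0

noncomputable def residual (t : ι) : ι → ℝ := Pi.single t 1 - regCoeff S U t

variable {S U} in
theorem regCoeff_of_notMem {t p : ι} (hp : p ∉ U) : regCoeff S U t p = 0 := dif_neg hp

variable {S U} in
theorem residual_of_notMem {t p : ι} (hp : p ∉ U) (hpt : p ≠ t) : residual S U t p = 0 := by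
  simp [residual, regCoeff_of_notMem hp, hpt]

variable {S U} in
theorem residual_self_of_notMem {t : ι} (ht : t ∉ U) : residual S U t t = 1 := by
  simp [residual, regCoeff_of_notMem ht]

variable [Fintype ι]

noncomputable def partialCov (i j : ι) : ℝ := (S *ᵥ residual S U j) i

variable {S U}

theorem dotProduct_eq_zero_of_support {v g : ι → ℝ} (hv : ∀ p ∉ U, v p = 0)
    (hg : ∀ p ∈ U, g p = 0) : v ⬝ᵥ g = 0 :=
  Finset.sum_eq_zero fun p _ => by
    by_cases hp : p ∈ U
    · rw [hg p hp, mul_zero]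
    · rw [hv p hp, zero_mul]

theorem residual_dotProduct {t : ι} {g : ι → ℝ} (hg : ∀ p ∈ U, g p = 0) :
    residual S U t ⬝ᵥ g = g t := by
  rw [residual, sub_dotProduct, single_dotProduct, one_mul,
    dotProduct_eq_zero_of_support (fun _ => regCoeff_of_notMem) hg, sub_zero]

theorem mulVec_regCoeff_apply (t p : ι) :
    (S *ᵥ regCoeff S U t) p =
      ∑ u : U, S p u *
        ((S.submatrix (↑) (↑) : Matrix U U ℝ)⁻¹ *ᵥ fun u => S u t) u := by
  rw [mulVec, dotProduct, ← Finset.sum_subset (Finset.subset_univ U) fun q _ hq => by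
      rw [regCoeff_of_notMem hq, mul_zero], ← Finset.sum_coe_sort U]
  exact Finset.sum_congr rfl fun u _ => by rw [regCoeff, dif_pos u.2]

theorem PosDef.partialCov_of_mem (hS : S.PosDef) {p : ι} (hp : p ∈ U) (t : ι) :
    partialCov S U p t = 0 := by
  have hU : IsUnit (S.submatrix (↑) (↑) : Matrix U U ℝ).det :=
    (isUnit_iff_isUnit_det _).mp (hS.submatrix Subtype.val_injective).isUnit
  have hregress : (S *ᵥ regCoeff S U t) p =
      ((S.submatrix (↑) (↑) : Matrix U U ℝ) *ᵥ
        ((S.submatrix (↑) (↑) : Matrix U U ℝ)⁻¹ *ᵥ fun u => S u t)) ⟨p, hp⟩ :=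
    mulVec_regCoeff_apply t p
  rw [partialCov, residual, mulVec_sub, Pi.sub_apply, hregress, mulVec_mulVec,
    mul_nonsing_inv _ hU, one_mulVec, mulVec_single_one]
  simp

theorem PosDef.partialCov_eq_dotProduct (hS : S.PosDef) (i j : ι) :
    partialCov S U i j = residual S U i ⬝ᵥ S *ᵥ residual S U j :=
  (residual_dotProduct fun _ hp => hS.partialCov_of_mem hp j).symm

theorem PosDef.partialCov_comm (hS : S.PosDef) (i j : ι) :
    partialCov S U i j = partialCov S U j i := by
  rw [hS.partialCov_eq_dotProduct, hS.partialCov_eq_dotProduct, hS.dotProduct_mulVec_comm]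

theorem PosDef.partialCov_self_nonneg (hS : S.PosDef) (t : ι) : 0 ≤ partialCov S U t t := by
  rw [hS.partialCov_eq_dotProduct]
  exact hS.dotProduct_mulVec_self_nonneg _

theorem PosDef.partialCov_self_le (hS : S.PosDef) (t : ι) : partialCov S U t t ≤ S t t := by
  set a := regCoeff S U t
  have hcov : partialCov S U t t = S t t - (S *ᵥ a) t := by
    simp [partialCov, residual, a, mulVec_sub]
  have horth : a ⬝ᵥ S *ᵥ residual S U t = 0 :=
    dotProduct_eq_zero_of_support (fun _ => regCoeff_of_notMem)
      fun _ hp => hS.partialCov_of_mem hp t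
  have hquad : (S *ᵥ a) t = a ⬝ᵥ S *ᵥ a :=
    calc (S *ᵥ a) t = Pi.single t 1 ⬝ᵥ S *ᵥ a := by rw [single_dotProduct, one_mul]
      _ = a ⬝ᵥ S *ᵥ (residual S U t + a) := by
        rw [hS.dotProduct_mulVec_comm, residual, sub_add_cancel]
      _ = a ⬝ᵥ S *ᵥ a := by
        rw [mulVec_add, dotProduct_add, horth, zero_add]
  linarith [hS.dotProduct_mulVec_self_nonneg a]

theorem PosDef.one_le_inv_apply_mul_partialCov_self (hS : S.PosDef) {t : ι} (ht : t ∉ U) :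
    1 ≤ S⁻¹ t t * partialCov S U t t := by
  set u := S⁻¹ *ᵥ Pi.single t 1
  set r := residual S U t
  have hSu : S *ᵥ u = Pi.single t 1 := by
    rw [mulVec_mulVec, mul_nonsing_inv _ ((isUnit_iff_isUnit_det _).mp hS.isUnit), one_mulVec]
  have huu : u ⬝ᵥ S *ᵥ u = S⁻¹ t t := by
    rw [hSu, dotProduct_single, mul_one]
    exact congrFun (mulVec_single_one S⁻¹ t) t
  have hru : r ⬝ᵥ S *ᵥ u = 1 := by
    rw [hSu, dotProduct_single, mul_one]
    exact residual_self_of_notMem ht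
  have hur : u ⬝ᵥ S *ᵥ r = 1 := by rw [hS.dotProduct_mulVec_comm, hru]
  have hcs := (toBilin' S).apply_mul_apply_le_of_forall_zero_le
    (fun v => by rw [toBilin'_apply']; exact hS.dotProduct_mulVec_self_nonneg v) u r
  simp only [toBilin'_apply'] at hcs
  rwa [hur, hru, huu, ← hS.partialCov_eq_dotProduct, one_mul] at hcs

end Matrix

theorem Real.div_sqrt_mul_eq_sqrt_div {a : ℝ} (ha : 0 ≤ a) (b : ℝ) :
    a / √(a * b) = √(a / b) := by
  rw [Real.sqrt_mul ha, div_mul_eq_div_div, Real.div_sqrt, Real.sqrt_div ha]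

namespace SEM

open Matrix

variable {m : ℕ}

theorem condCov_apply (S : Matrix (Fin m) (Fin m) ℝ) (i j : Fin m) (W : Finset (Fin m))
    (a b : Fin 2) : condCov S i j W a b = partialCov S W (![i, j] a) (![i, j] b) := by
  rw [condCov, partialCov, Matrix.residual, mulVec_sub, Pi.sub_apply, mulVec_single_one,
    mulVec_regCoeff_apply]
  simp only [Matrix.sub_apply, submatrix_apply, col_apply, mul_apply, mulVec, dotProduct,
    Finset.mul_sum, Finset.sum_mul, mul_assoc]
  rw [Finset.sum_comm]

theorem parcorr_eq (S : Matrix (Fin m) (Fin m) ℝ) (i j : Fin m) (W : Finset (Fin m)) :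
    parcorr S i j W = partialCov S W i j / √(partialCov S W i i * partialCov S W j j) := by
  simp [parcorr, condCov_apply]

variable {B : Matrix (Fin m) (Fin m) ℝ}

theorem StrictLower.lt_of_edge (hB : StrictLower B) {q p : Fin m} (h : Edge B q p) : q < p :=
  lt_of_not_ge fun hpq => h (hB p q hpq)

theorem StrictLower.le_of_desc (hB : StrictLower B) {q p : Fin m} (h : Desc B q p) : q ≤ p := by
  induction h with
  | refl => exact le_rfl
  | tail _ hedge ih => exact ih.trans (hB.lt_of_edge hedge).le

theorem StrictLower.det_one_sub (hB : StrictLower B) : (1 - B).det = 1 := by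
  rw [det_of_isLowerTriangular _ fun i j hij => ?_]
  · simp [hB _ _ le_rfl]
  · have hij : i < j := hij
    simp [one_apply_ne hij.ne, hB i j hij.le]

theorem StrictLower.isUnit_det_one_sub (hB : StrictLower B) : IsUnit (1 - B).det := by
  rw [hB.det_one_sub]
  exact isUnit_one

theorem StrictLower.desc_of_inv_one_sub_apply_ne_zero (hB : StrictLower B) {q z : Fin m}
    (h : (1 - B)⁻¹ q z ≠ 0) : Desc B z q := by
  induction q using WellFoundedLT.induction with
  | _ q ih =>
  have hA : (1 - B)⁻¹ = 1 + B * (1 - B)⁻¹ := by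
    have h := mul_nonsing_inv (1 - B) hB.isUnit_det_one_sub
    rw [sub_mul, one_mul] at h
    exact sub_eq_iff_eq_add.mp h
  rw [hA, Matrix.add_apply, mul_apply] at h
  by_cases hqz : q = z
  · exact hqz ▸ .refl
  rw [one_apply_ne hqz, zero_add] at h
  obtain ⟨r, -, hr⟩ := Finset.exists_ne_zero_of_sum_ne_zero h
  have hedge : Edge B r q := left_ne_zero_of_mul hr
  exact (ih r (hB.lt_of_edge hedge) (right_ne_zero_of_mul hr)).tail hedge

theorem StrictLower.one_sub_mul_cov (hB : StrictLower B) (D : Matrix (Fin m) (Fin m) ℝ) :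
    (1 - B) * cov B D = D * ((1 - B)⁻¹)ᵀ := by
  rw [cov, ← mul_assoc, ← mul_assoc, mul_nonsing_inv _ hB.isUnit_det_one_sub, one_mul,
    transpose_nonsing_inv]

theorem StrictLower.posDef_cov (hB : StrictLower B) {d : Fin m → ℝ} (hd : ∀ p, 0 < d p) :
    (cov B (diagonal d)).PosDef := by
  have hA : IsUnit (1 - B)⁻¹ := isUnit_nonsing_inv_iff.mpr
    ((isUnit_iff_isUnit_det _).mpr hB.isUnit_det_one_sub)
  rw [cov, ← transpose_nonsing_inv, ← conjTranspose_eq_transpose_of_trivial,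
    ← star_eq_conjTranspose]
  exact (IsUnit.posDef_star_right_conjugate_iff hA).mpr (PosDef.diagonal hd)

theorem StrictLower.eCoef_eq (hB : StrictLower B) {x z : Fin m} (hxz : x < z) :
    eCoef B x z = B z x := by
  simp [eCoef, hB x z hxz.le, eq_comm]

theorem StrictLower.partialCov_cov_of_ancestral (hB : StrictLower B) {d : Fin m → ℝ}
    (hd : ∀ p, 0 < d p) {x z : Fin m} (hxz : x < z) {U : Finset (Fin m)}
    (hanc : Ancestral B (U ∪ {x, z})) (hnodesc : ∀ p ∈ U, ¬ Desc B z p) :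
    partialCov (cov B (diagonal d)) U z x = B z x * partialCov (cov B (diagonal d)) U x x := by
  set S := cov B (diagonal d)
  have hS : S.PosDef := hB.posDef_cov hd
  set r := Matrix.residual S U x
  set g := S *ᵥ r
  have hsplit : g z = ((1 - B) *ᵥ g) z + (B *ᵥ g) z := by simp [sub_mulVec]
  -- `(1 - B) Σ = D (1 - B)⁻ᵀ`, and `(1 - B)⁻¹ q z = 0` on the support `U ∪ {x}` of `r`.
  have hnoise : ((1 - B) *ᵥ g) z = 0 := by
    rw [mulVec_mulVec, hB.one_sub_mul_cov, ← mulVec_mulVec, mulVec_diagonal, mulVec_transpose,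
      vecMul, dotProduct]
    refine mul_eq_zero_of_right _ (Finset.sum_eq_zero fun q _ => ?_)
    by_cases hq : q ∈ U ∨ q = x
    · have hzq : ¬ Desc B z q := by
        rcases hq with hq | rfl
        · exact hnodesc q hq
        · exact fun h => (hB.le_of_desc h).not_gt hxz
      rw [not_imp_comm.mp hB.desc_of_inv_one_sub_apply_ne_zero hzq, mul_zero]
    · obtain ⟨hqU, hqx⟩ := not_or.mp hq
      exact mul_eq_zero_of_left (residual_of_notMem hqU hqx) _
  have hparents : (B *ᵥ g) z = B z x * g x := by
    refine Finset.sum_eq_single x (fun p _ hpx => ?_) (absurd (Finset.mem_univ x))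
    by_cases hp : B z p = 0
    · exact mul_eq_zero_of_left hp _
    have hpz : p ≠ z := fun h => hp (h ▸ hB z z le_rfl)
    have hpU : p ∈ U := by simpa [hpx, hpz] using hanc z (by simp) p hp
    exact mul_eq_zero_of_right _ (hS.partialCov_of_mem hpU x)
  change g z = B z x * g x
  rw [hsplit, hnoise, hparents, zero_add]

theorem StrictLower.abs_parcorr_cov_le (hB : StrictLower B) {d : Fin m → ℝ}
    (hd : ∀ p, 0 < d p) {x z : Fin m} (hxz : x < z) {U : Finset (Fin m)} (hzU : z ∉ U)
    (hanc : Ancestral B (U ∪ {x, z})) (hnodesc : ∀ p ∈ U, ¬ Desc B z p) :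
    |parcorr (cov B (diagonal d)) x z U| ≤
      |B z x| * √(cov B (diagonal d) x x * (cov B (diagonal d))⁻¹ z z) := by
  set S := cov B (diagonal d)
  have hS : S.PosDef := hB.posDef_cov hd
  have hVx0 := hS.partialCov_self_nonneg (U := U) x
  have hVx := hS.partialCov_self_le (U := U) x
  have hVz := hS.one_le_inv_apply_mul_partialCov_self hzU
  have hVz0 : 0 < partialCov S U z z :=
    pos_of_mul_pos_right (one_pos.trans_le hVz) hS.inv.posSemidef.diag_nonneg
  rw [parcorr_eq, hS.partialCov_comm, hB.partialCov_cov_of_ancestral hd hxz hanc hnodesc,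
    mul_div_assoc, abs_mul, Real.div_sqrt_mul_eq_sqrt_div hVx0,
    abs_of_nonneg (Real.sqrt_nonneg _)]
  gcongr
  rw [div_le_iff₀ hVz0]
  nlinarith [hS.diag_pos (i := x)]

end SEM

open SEM Matrix

theorem shielded_collider_parcorr_diff_small_general {m : ℕ}
    (B : Matrix (Fin m) (Fin m) ℝ) (d : Fin m → ℝ)
    (hB : SEM.StrictLower B) (hd : ∀ p, 0 < d p)
    (J k δ : ℝ) (hJ : 0 < J) (hk : 0 < k)
    (hstd : ∀ p, SEM.cov B (Matrix.diagonal d) p p = 1)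
    (hNVV : ∀ p, J ≤ (((SEM.cov B (Matrix.diagonal d))⁻¹) p p)⁻¹)
    -- the k-Triangle-Faithfulness assumption
    (hkTF : ∀ x y z : Fin m,
      (SEM.Edge B x y ∨ SEM.Edge B y x) → (SEM.Edge B y z ∨ SEM.Edge B z y) →
      (SEM.Edge B x z ∨ SEM.Edge B z x) →
      ((¬ (SEM.Edge B x y ∧ SEM.Edge B z y)) →
        ∀ W : Finset (Fin m), x ∉ W → z ∉ W → y ∉ W →
          |SEM.parcorr (SEM.cov B (Matrix.diagonal d)) x z W| ≥ k * |SEM.eCoef B x z|) ∧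
      ((SEM.Edge B x y ∧ SEM.Edge B z y) →
        ∀ W : Finset (Fin m), x ∉ W → z ∉ W → y ∈ W →
          |SEM.parcorr (SEM.cov B (Matrix.diagonal d)) x z W| ≥ k * |SEM.eCoef B x z|))
    -- a shielded collider `x → y ← z`
    (x y z : Fin m) (hxz : x < z)
    (hcol : SEM.Edge B x y ∧ SEM.Edge B z y)
    (hshield : SEM.Edge B x z ∨ SEM.Edge B z x)
    -- the conditioning set `W`, containing `y`, with a small partial correlation
    (W : Finset (Fin m)) (hxW : x ∉ W) (hzW : z ∉ W) (hyW : y ∈ W)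
    (hsmall : |SEM.parcorr (SEM.cov B (Matrix.diagonal d)) x z W| < δ)
    -- the ancestral conditioning set `U`
    (U : Finset (Fin m)) (hzU : z ∉ U)
    (hanc : SEM.Ancestral B (U ∪ {x, z}))
    (hnodesc : ∀ p ∈ U, ¬ SEM.Desc B z p) :
    |SEM.parcorr (SEM.cov B (Matrix.diagonal d)) x z U -
        SEM.parcorr (SEM.cov B (Matrix.diagonal d)) x z W| <
      δ * (1 + (Real.sqrt J)⁻¹ / k) := by
  set S := SEM.cov B (Matrix.diagonal d)
  have hUedge : |parcorr S x z U| ≤ |B z x| * √(S x x * S⁻¹ z z) :=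
    hB.abs_parcorr_cov_le hd hxz hzU hanc hnodesc
  have hWedge : k * |B z x| ≤ |parcorr S x z W| := by
    simpa [hB.eCoef_eq hxz] using
      (hkTF x y z (.inl hcol.1) (.inr hcol.2) hshield).2 hcol W hxW hzW hyW
  have hinv : 0 < S⁻¹ z z := (hB.posDef_cov hd).inv.diag_pos
  have hsqrt : √(S x x * S⁻¹ z z) ≤ (√J)⁻¹ := by
    rw [hstd x, one_mul, ← Real.sqrt_inv]
    exact Real.sqrt_le_sqrt ((le_inv_comm₀ hinv hJ).mpr (hNVV z))
  have hρU : |parcorr S x z U| ≤ |parcorr S x z W| * ((√J)⁻¹ / k) :=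
    calc |parcorr S x z U| ≤ |B z x| * (√J)⁻¹ := hUedge.trans (by gcongr)
      _ ≤ |parcorr S x z W| / k * (√J)⁻¹ := by gcongr; exact (le_div_iff₀' hk).mpr hWedge
      _ = |parcorr S x z W| * ((√J)⁻¹ / k) := by ring
  calc |parcorr S x z U - parcorr S x z W| ≤ |parcorr S x z U| + |parcorr S x z W| := abs_sub _ _
    _ < δ * ((√J)⁻¹ / k) + δ := add_lt_add_of_le_of_lt (hρU.trans (by gcongr)) hsmall
    _ = δ * (1 + (√J)⁻¹ / k) := by ring

/-- Under k-Triangle-Faithfulness (k > 0) and NVV(J): if `(x, y, z)` is a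
shielded collider (a triangle with `x → y ← z`, and, wlog, `z` not an ancestor of `x`,
i.e. `x < z` in the causal order) and `W` is a conditioning set containing `y` with
`|ρ(x, z | W)| < δ`, then for any ancestral conditioning set `U` containing neither `y`
nor any descendant of `z`, `|ρ(x, z | U) − ρ(x, z | W)| < δ(1 + J^{−1/2}/k)`. -/
theorem shielded_collider_parcorr_diff_small {m : ℕ}
    (B : Matrix (Fin m) (Fin m) ℝ) (d : Fin m → ℝ)
    (hB : SEM.StrictLower B) (hd : ∀ p, 0 < d p)
    (J k δ : ℝ) (hJ : 0 < J) (hk : 0 < k)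
    (hstd : ∀ p, SEM.cov B (Matrix.diagonal d) p p = 1)
    (hNVV : ∀ p, J ≤ (((SEM.cov B (Matrix.diagonal d))⁻¹) p p)⁻¹)
    -- the k-Triangle-Faithfulness assumption
    (hkTF : ∀ x y z : Fin m,
      (SEM.Edge B x y ∨ SEM.Edge B y x) → (SEM.Edge B y z ∨ SEM.Edge B z y) →
      (SEM.Edge B x z ∨ SEM.Edge B z x) →
      ((¬ (SEM.Edge B x y ∧ SEM.Edge B z y)) →
        ∀ W : Finset (Fin m), x ∉ W → z ∉ W → y ∉ W →
          |SEM.parcorr (SEM.cov B (Matrix.diagonal d)) x z W| ≥ k * |SEM.eCoef B x z|) ∧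
      ((SEM.Edge B x y ∧ SEM.Edge B z y) →
        ∀ W : Finset (Fin m), x ∉ W → z ∉ W → y ∈ W →
          |SEM.parcorr (SEM.cov B (Matrix.diagonal d)) x z W| ≥ k * |SEM.eCoef B x z|))
    -- a shielded collider `x → y ← z`
    (x y z : Fin m) (hxz : x < z)
    (hcol : SEM.Edge B x y ∧ SEM.Edge B z y)
    (hshield : SEM.Edge B x z ∨ SEM.Edge B z x)
    -- the conditioning set `W`, containing `y`, with a small partial correlation
    (W : Finset (Fin m)) (hxW : x ∉ W) (hzW : z ∉ W) (hyW : y ∈ W)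
    (hsmall : |SEM.parcorr (SEM.cov B (Matrix.diagonal d)) x z W| < δ)
    -- the ancestral conditioning set `U`
    (U : Finset (Fin m)) (hxU : x ∉ U) (hzU : z ∉ U) (hyU : y ∉ U)
    (hanc : SEM.Ancestral B (U ∪ {x, z}))
    (hnodesc : ∀ p ∈ U, ¬ SEM.Desc B z p) :
    |SEM.parcorr (SEM.cov B (Matrix.diagonal d)) x z U -
        SEM.parcorr (SEM.cov B (Matrix.diagonal d)) x z W| <
      δ * (1 + (Real.sqrt J)⁻¹ / k) :=
  shielded_collider_parcorr_diff_small_general B d hB hd J k δ hJ hk hstd hNVV hkTF x y z hxz hcol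
    hshield W hxW hzW hyW hsmall U hzU hanc hnodesc
end

section
/- If the true causal DAG G satisfies the Causal Markov and Adjacency-Faithfulness assumptions with respect to a perfect conditional independence oracle, then the graph produced by step S2 of the SGS algorithm (removing an edge between X and Y iff some subset S of V \ {X, Y} renders them independent) has exactly the adjacencies of G. -/
/-- A directed acyclic graph on vertex set `V`. -/
structure DAG (V : Type*) where
  Edge : V → V → Prop
  acyclic : ∀ x, ¬ Relation.TransGen Edge x x

namespace DAG

variable {V : Type*} (G : DAG V)

/-- `x` and `y` are adjacent: there is an edge between them in either direction. -/
def Adj (x y : V) : Prop := G.Edge x y ∨ G.Edge y x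

/-- `y` is a descendant of `x` (`x` is an ancestor of `y`); reflexive. -/
def Desc (x y : V) : Prop := Relation.ReflTransGen G.Edge x y

/-- The parents of `v`. -/
def Parents (v : V) : Set V := {u | G.Edge u v}

/-- The vertices that are neither parents nor descendants of `v`. -/
def NonDescNonPar (v : V) : Set V := {u | ¬ G.Desc v u ∧ ¬ G.Edge u v}

/-- `b` is a collider on the path `p`: `p` contains a consecutive subsequence
`a, b, c` with both edges pointing into `b`. -/
def ColliderOn (p : List V) (b : V) : Prop :=
  ∃ a c, [a, b, c] <:+: p ∧ G.Edge a b ∧ G.Edge c b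

/-- `b` is active on the path `p` between `x` and `y` conditional on `Z`:
it is an endpoint, or a noncollider not in `Z`, or a collider that is in `Z`
or has a descendant in `Z`. -/
def ActiveOn (p : List V) (x y : V) (Z : Set V) (b : V) : Prop :=
  b = x ∨ b = y ∨
    (¬ G.ColliderOn p b ∧ b ∉ Z) ∨
    (G.ColliderOn p b ∧ ∃ d ∈ Z, G.Desc b d)

/-- `p` is an acyclic path between `x` and `y`, every vertex of which is
active conditional on `Z`. -/
def ActivePath (p : List V) (x y : V) (Z : Set V) : Prop :=
  p.Nodup ∧ 2 ≤ p.length ∧ p.Chain' G.Adj ∧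
    p.head? = some x ∧ p.getLast? = some y ∧
    ∀ b ∈ p, G.ActiveOn p x y Z b

/-- `x` is d-separated from `y` conditional on `Z`: there is no active acyclic
path between `x` and `y` conditional on `Z`. -/
def DSep (x y : V) (Z : Set V) : Prop := ¬ ∃ p : List V, G.ActivePath p x y Z

/-- `(x, y, z)` is an unshielded collider. -/
def UnshieldedCollider (x y z : V) : Prop :=
  G.Edge x y ∧ G.Edge z y ∧ ¬ G.Adj x z

/-- `(x, y, z)` is an unshielded noncollider. -/
def UnshieldedNoncollider (x y z : V) : Prop :=
  G.Adj x y ∧ G.Adj y z ∧ ¬ G.Adj x z ∧ ¬ (G.Edge x y ∧ G.Edge z y)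

end DAG

lemma List.Nodup.eq_of_infix_cons_cons {α : Type*} {x b u w : α} {t : List α}
    (hnd : (x :: b :: t).Nodup) (h : [u, b, w] <:+: x :: b :: t) : u = x := by
  obtain ⟨s, r, h⟩ := h
  rcases s with _ | ⟨e, _ | ⟨f, s⟩⟩
  · exact (by simpa using h : u = x ∧ _).1
  · obtain ⟨-, -, rfl⟩ : e = x ∧ u = b ∧ b :: w :: r = t := by simpa using h
    simp at hnd
  · obtain ⟨rfl, rfl, rfl⟩ : e = x ∧ f = b ∧ s ++ u :: b :: w :: r = t := by simpa using h
    simp at hnd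

namespace DAG

variable {V : Type*} (G : DAG V)

lemma adj_comm {x y : V} : G.Adj x y ↔ G.Adj y x := or_comm

lemma not_edge_self (x : V) : ¬ G.Edge x x :=
  fun h => G.acyclic x (.single h)

lemma not_desc_of_desc {x y : V} (hxy : x ≠ y) (h : G.Desc x y) : ¬ G.Desc y x := by
  intro hyx
  obtain rfl | hxy' := Relation.reflTransGen_iff_eq_or_transGen.mp h
  · exact hxy rfl
  · exact G.acyclic x (hxy'.trans_left hyx)

variable {G}

lemma ColliderOn.mono {l l' : List V} {b : V} (hl : l <:+: l') (h : G.ColliderOn l b) :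
    G.ColliderOn l' b :=
  let ⟨a, c, hinf, hab, hcb⟩ := h
  ⟨a, c, hinf.trans hl, hab, hcb⟩

lemma ColliderOn.mem {l : List V} {b : V} (h : G.ColliderOn l b) : b ∈ l :=
  let ⟨_, _, hinf, _, _⟩ := h
  hinf.subset (by simp)

lemma colliderOn_reverse {l : List V} {b : V} : G.ColliderOn l.reverse b ↔ G.ColliderOn l b := by
  constructor <;> rintro ⟨a, c, hinf, hab, hcb⟩ <;> refine ⟨c, a, ?_, hcb, hab⟩
  · simpa using List.reverse_infix.mpr hinf
  · simpa using List.reverse_infix.mpr hinf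

lemma ActivePath.reverse {p : List V} {x y : V} {Z : Set V} (h : G.ActivePath p x y Z) :
    G.ActivePath p.reverse y x Z := by
  obtain ⟨hnd, hlen, hch, hhd, hlast, hact⟩ := h
  refine ⟨List.nodup_reverse.mpr hnd, by simpa using hlen,
    List.isChain_reverse.mpr (hch.imp fun _ _ => G.adj_comm.mp), by simpa using hlast,
    by simpa using hhd, fun b hb => ?_⟩
  simp only [ActiveOn, colliderOn_reverse]
  rcases hact b (List.mem_reverse.mp hb) with h | h | h | h <;> simp [h]

lemma dSep_comm {x y : V} {Z : Set V} : G.DSep x y Z ↔ G.DSep y x Z :=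
  ⟨fun h ⟨p, hp⟩ => h ⟨p.reverse, by simpa using hp.reverse⟩,
    fun h ⟨p, hp⟩ => h ⟨p.reverse, by simpa using hp.reverse⟩⟩

lemma isChain_edge_of_not_colliderOn {a b : V} {t : List V}
    (hch : (a :: b :: t).IsChain G.Adj) (hab : G.Edge a b)
    (hcol : ∀ v, Relation.TransGen G.Edge a v → ¬ G.ColliderOn (a :: b :: t) v) :
    (a :: b :: t).IsChain G.Edge := by
  induction t generalizing a b with
  | nil => exact .cons_cons hab (.singleton b)
  | cons c t ih =>
    obtain ⟨-, hch⟩ := List.isChain_cons_cons.mp hch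
    have hbc : G.Edge b c := by
      refine (List.isChain_cons_cons.mp hch).1.resolve_right fun hcb => ?_
      exact hcol b (.single hab) ⟨a, c, List.infix_append [] _ _, hab, hcb⟩
    refine .cons_cons hab (ih hch hbc fun v hbv hv => ?_)
    exact hcol v (.head hab hbv) (hv.mono (List.suffix_cons a _).isInfix)

lemma desc_of_isChain_edge {p : List V} {x y : V} (hch : p.IsChain G.Edge)
    (hhd : p.head? = some x) (hlast : p.getLast? = some y) : G.Desc x y := by
  obtain _ | ⟨a, l⟩ := p
  · simp at hhd
  · obtain rfl : a = x := by simpa using hhd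
    exact List.relationReflTransGen_of_exists_isChain_cons l hch
      (Option.some_injective _ (by simpa [List.getLast?_eq_some_getLast] using hlast))

variable (G)

/- A path leaving `x` forwards stays directed, since its first collider would be a descendant
of `x` and an ancestor of a parent of `x`; a path entering `x` through a parent is blocked at
that parent. -/
theorem dSep_parents_of_not_desc_of_not_adj {x y : V} (hdesc : ¬ G.Desc x y)
    (hadj : ¬ G.Adj x y) : G.DSep x y (G.Parents x) := by
  rintro ⟨p, hnd, hlen, hch, hhd, hlast, hact⟩
  obtain ⟨b, t, rfl⟩ : ∃ b t, p = x :: b :: t := by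
    match p, hhd, hlen with
    | _ :: b :: t, hhd, _ => exact ⟨b, t, by simpa using hhd⟩
  rcases (List.isChain_cons_cons.mp hch).1 with hxb | hbx
  · refine hdesc (desc_of_isChain_edge (isChain_edge_of_not_colliderOn hch hxb ?_) hhd hlast)
    intro v hxv hv
    rcases hact v hv.mem with rfl | rfl | ⟨hnc, -⟩ | ⟨-, d, hdx, hvd⟩
    · exact G.acyclic v hxv
    · exact hdesc hxv.to_reflTransGen
    · exact hnc hv
    · exact G.acyclic x (.tail (hxv.trans_left hvd) hdx)
  · have hby : b ≠ y := by rintro rfl; exact hadj (.inr hbx)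
    have hbx' : b ≠ x := by rintro rfl; exact G.not_edge_self b hbx
    rcases hact b (by simp) with h | h | ⟨-, hbZ⟩ | ⟨⟨u, w, hinf, hub, -⟩, -⟩
    · exact hbx' h
    · exact hby h
    · exact hbZ hbx
    · obtain rfl := hnd.eq_of_infix_cons_cons hinf
      exact G.acyclic u (.head hub (.single hbx))

theorem exists_dSep_of_not_adj {x y : V} (hxy : x ≠ y) (hadj : ¬ G.Adj x y) :
    ∃ S : Set V, x ∉ S ∧ y ∉ S ∧ G.DSep x y S := by
  by_cases hdesc : G.Desc x y
  · refine ⟨G.Parents y, fun h => hadj (.inl h), G.not_edge_self y, dSep_comm.mpr ?_⟩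
    exact G.dSep_parents_of_not_desc_of_not_adj (G.not_desc_of_desc hxy hdesc)
      (G.adj_comm.not.mp hadj)
  · exact ⟨G.Parents x, G.not_edge_self x, fun h => hadj (.inr h),
      G.dSep_parents_of_not_desc_of_not_adj hdesc hadj⟩

end DAG

theorem sgs_step2_adjacencies_correct_general
    {V : Type*} (G : DAG V)
    (CI : V → V → Set V → Prop)
    (hMarkov : ∀ (x y : V) (Z : Set V), G.DSep x y Z → CI x y Z)
    (hAdjFaith : ∀ x y : V, G.Adj x y →
      ∀ S : Set V, x ∉ S → y ∉ S → ¬ CI x y S) :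
    ∀ x y : V, x ≠ y →
      ((¬ ∃ S : Set V, x ∉ S ∧ y ∉ S ∧ CI x y S) ↔ G.Adj x y) := by
  intro x y hxy
  constructor
  · intro hnone
    by_contra hadj
    obtain ⟨S, hxS, hyS, hsep⟩ := G.exists_dSep_of_not_adj hxy hadj
    exact hnone ⟨S, hxS, hyS, hMarkov x y S hsep⟩
  · rintro hadj ⟨S, hxS, hyS, hCI⟩
    exact hAdjFaith x y hadj S hxS hyS hCI

/-- If the true causal DAG `G` satisfies the Causal Markov and
Adjacency-Faithfulness assumptions with respect to a perfect conditional independence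
oracle `CI`, then step S2 of the SGS algorithm (keep an edge between `x` and `y` iff no
subset of the remaining variables renders them independent) recovers exactly the
adjacencies of `G`. -/
theorem sgs_step2_adjacencies_correct
    {V : Type*} [Fintype V] [DecidableEq V] (G : DAG V)
    (CI : V → V → Set V → Prop)
    (hMarkov : ∀ (x y : V) (Z : Set V), G.DSep x y Z → CI x y Z)
    (hAdjFaith : ∀ x y : V, G.Adj x y →
      ∀ S : Set V, x ∉ S → y ∉ S → ¬ CI x y S) :
    ∀ x y : V, x ≠ y →
      ((¬ ∃ S : Set V, x ∉ S ∧ y ∉ S ∧ CI x y S) ↔ G.Adj x y) :=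
  sgs_step2_adjacencies_correct_general G CI hMarkov hAdjFaith
end
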